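/- Let α be a class in the positive cone of a signature-(1,m) inner product space, vanishing on classes e₁,…,eₙ that span a negative definite subspace, with eᵢ·eⱼ ≥ 0 for i ≠ j. Then there exist sᵢ > 0 such that ∑ᵢ sᵢ eᵢ·eⱼ < 0 for every j. -/

import Mathlib

/-!
Let `M` be the Gram matrix of the `eᵢ`. Since `x ↦ xᵀ M x` is negative definite, `M` is invertible
and we may solve `sᵀ M = (-1, …, -1)`. The negative part `t` of `s` then satisfies
`tᵀ M t = (s + t)ᵀ M t - sᵀ M t ≥ 0`: the first term is nonnegative because `s + t` and `t` have
disjoint supports and `M` is nonnegative off the diagonal. Hence `t = 0`, and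
`sⱼ Mⱼⱼ ≤ (sᵀ M)ⱼ < 0` forces `sⱼ > 0`.
-/

open Matrix

namespace Matrix

variable {ι : Type*} [Fintype ι] {M : Matrix ι ι ℝ}

theorem vecMulLinear_injective_of_vecMul_dotProduct_self_neg
    (hneg : ∀ x ≠ 0, x ᵥ* M ⬝ᵥ x < 0) : Function.Injective M.vecMulLinear := by
  rw [injective_iff_map_eq_zero]
  intro x hx
  by_contra hx0
  rw [vecMulLinear_apply] at hx
  simpa [hx] using hneg x hx0

theorem vecMul_dotProduct_nonneg_of_mul_eq_zero (hoff : ∀ i j, i ≠ j → 0 ≤ M i j)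
    {u t : ι → ℝ} (hu : 0 ≤ u) (ht : 0 ≤ t) (hut : ∀ i, u i * t i = 0) :
    0 ≤ u ᵥ* M ⬝ᵥ t := by
  refine Finset.sum_nonneg fun j _ => ?_
  rw [vecMul, dotProduct, Finset.sum_mul]
  refine Finset.sum_nonneg fun i _ => ?_
  rcases eq_or_ne i j with rfl | hij
  · rw [mul_right_comm, hut, zero_mul]
  · exact mul_nonneg (mul_nonneg (hu i) (hoff i j hij)) (ht j)

theorem nonneg_of_vecMul_nonpos (hneg : ∀ x ≠ 0, x ᵥ* M ⬝ᵥ x < 0)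
    (hoff : ∀ i j, i ≠ j → 0 ≤ M i j) {s : ι → ℝ} (hs : s ᵥ* M ≤ 0) : 0 ≤ s := by
  set t : ι → ℝ := fun i => max (-s i) 0
  have ht : 0 ≤ t := fun i => le_max_right _ _
  have hst : 0 ≤ s + t := fun i => show 0 ≤ s i + max (-s i) 0 by linarith [le_max_left (-s i) 0]
  have hdisj : ∀ i, (s + t) i * t i = 0 := fun i => by
    rcases le_total 0 (s i) with h | h <;> simp [t, h]
  have hQ : 0 ≤ t ᵥ* M ⬝ᵥ t := by
    have hpos := vecMul_dotProduct_nonneg_of_mul_eq_zero hoff hst ht hdisj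
    have hsM : s ᵥ* M ⬝ᵥ t ≤ 0 :=
      Finset.sum_nonpos fun j _ => mul_nonpos_of_nonpos_of_nonneg (hs j) (ht j)
    rw [add_vecMul, add_dotProduct] at hpos
    linarith
  have ht0 : t = 0 := by
    by_contra h
    exact (hneg t h).not_ge hQ
  intro i
  simpa [t] using congrFun ht0 i

theorem pos_of_nonneg_of_vecMul_neg (hoff : ∀ i j, i ≠ j → 0 ≤ M i j) {s : ι → ℝ}
    (hs : 0 ≤ s) {j : ι} (hj : (s ᵥ* M) j < 0) : 0 < s j := by
  classical
  have hdiag : (s ᵥ* M) j = s j * M j j + ∑ i ∈ Finset.univ.erase j, s i * M i j :=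
    (Finset.add_sum_erase _ (fun i => s i * M i j) (Finset.mem_univ j)).symm
  have hrest : 0 ≤ ∑ i ∈ Finset.univ.erase j, s i * M i j :=
    Finset.sum_nonneg fun i hi => mul_nonneg (hs i) (hoff i j (Finset.ne_of_mem_erase hi))
  refine (hs j).lt_of_ne fun h => ?_
  rw [hdiag, ← h, Pi.zero_apply, zero_mul, zero_add] at hj
  exact hrest.not_gt hj

theorem exists_pos_vecMul_neg (hneg : ∀ x ≠ 0, x ᵥ* M ⬝ᵥ x < 0)
    (hoff : ∀ i j, i ≠ j → 0 ≤ M i j) : ∃ s : ι → ℝ, (∀ i, 0 < s i) ∧ ∀ j, (s ᵥ* M) j < 0 := by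
  obtain ⟨s, hs⟩ := LinearMap.surjective_of_injective (f := M.vecMulLinear)
    (vecMulLinear_injective_of_vecMul_dotProduct_self_neg hneg) (fun _ => -1)
  have hneg_one : ∀ j, (s ᵥ* M) j < 0 := fun j => by simp [← vecMulLinear_apply, hs]
  have hs0 := nonneg_of_vecMul_nonpos hneg hoff fun j => (hneg_one j).le
  exact ⟨s, fun i => pos_of_nonneg_of_vecMul_neg hoff hs0 (hneg_one i), hneg_one⟩

end Matrix

theorem LinearMap.apply_sum_smul_sum_smul {ι V : Type*} [Fintype ι] [AddCommGroup V] [Module ℝ V]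
    (B : V →ₗ[ℝ] V →ₗ[ℝ] ℝ) (e : ι → V) (a b : ι → ℝ) :
    B (∑ i, a i • e i) (∑ j, b j • e j) = a ᵥ* Matrix.of (fun i j => B (e i) (e j)) ⬝ᵥ b := by
  simp [dotProduct, vecMul, Finset.mul_sum, mul_comm, mul_left_comm]

theorem stmt_13_general (V : Type*) [AddCommGroup V] [Module ℝ V]
    (B : V →ₗ[ℝ] V →ₗ[ℝ] ℝ)
    (n : ℕ) (e : Fin n → V)
    (hnegdef : ∀ a : Fin n → ℝ, a ≠ 0 →
      B (∑ i, a i • e i) (∑ i, a i • e i) < 0)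
    (hoff : ∀ i j, i ≠ j → 0 ≤ B (e i) (e j)) :
    ∃ s : Fin n → ℝ, (∀ i, 0 < s i) ∧ ∀ j, ∑ i, s i * B (e i) (e j) < 0 :=
  Matrix.exists_pos_vecMul_neg (M := Matrix.of fun i j => B (e i) (e j))
    (fun a ha => B.apply_sum_smul_sum_smul e a a ▸ hnegdef a ha) hoff

/-- Let α have positive square and vanish on classes e₁,…,eₙ spanning a
negative definite subspace, with eᵢ·eⱼ ≥ 0 for i ≠ j.  Then there exist
sᵢ > 0 with ∑ᵢ sᵢ (eᵢ·eⱼ) < 0 for every j. -/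
theorem stmt_13 (V : Type*) [AddCommGroup V] [Module ℝ V]
    (B : V →ₗ[ℝ] V →ₗ[ℝ] ℝ) (hBsymm : ∀ x y, B x y = B y x)
    (n : ℕ) (e : Fin n → V) (α : V)
    (hnegdef : ∀ a : Fin n → ℝ, a ≠ 0 →
      B (∑ i, a i • e i) (∑ i, a i • e i) < 0)
    (hoff : ∀ i j, i ≠ j → 0 ≤ B (e i) (e j))
    (hα : 0 < B α α) (hvan : ∀ i, B α (e i) = 0) :
    ∃ s : Fin n → ℝ, (∀ i, 0 < s i) ∧ ∀ j, ∑ i, s i * B (e i) (e j) < 0 :=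
  stmt_13_general V B n e hnegdef hoff
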